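/- arXiv:1311.7307 — 2 statements merged into one kernel-verified Lean document; each statement's English description precedes it below -/
import Mathlib

section
/- For every DIME E over a finite alphabet Σ and every symbol a ∈ Σ, the set {w(a) | w ∈ L(E)} ⊆ ℕ is representable by an interval possibly with 0 added: it is of the form {n, n+1, …, m}, {n, n+1, …}, or such a set with 0 adjoined. -/
set_option autoImplicit false

universe u v w

/-- An unordered word over an alphabet `σ`: a multiset over `σ`,
viewed as a function giving the number of occurrences of each symbol. -/
def UWord (σ : Type u) : Type u := σ → ℕ

/-- The empty unordered word `ε`. -/
def UWord.zero {σ : Type u} : UWord σ := fun _ => 0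

/-- Unordered concatenation (multiset union) of two unordered words. -/
def UWord.add {σ : Type u} (w₁ w₂ : UWord σ) : UWord σ := fun a => w₁ a + w₂ a

/-- The unordered word consisting of a single occurrence of `a`. -/
def UWord.single {σ : Type u} [DecidableEq σ] (a : σ) : UWord σ :=
  fun b => if b = a then 1 else 0

/-- Unordered concatenation of a list of unordered words. -/
def listSum {σ : Type u} (l : List (UWord σ)) : UWord σ := l.foldr UWord.add UWord.zero

/-- An interval multiplicity `[lo,hi]` (with `hi ∈ ℕ ∪ {∞}`), where the flag
`opt` marks the variant `[lo,hi]?` that additionally allows zero iterations. -/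
structure Iv : Type where
  lo : ℕ
  hi : ℕ∞
  opt : Bool

/-- Membership of a number of iterations in the set denoted by an interval multiplicity. -/
def Iv.Mem (I : Iv) (n : ℕ) : Prop :=
  (I.lo ≤ n ∧ (n : ℕ∞) ≤ I.hi) ∨ (I.opt = true ∧ n = 0)

/-- The multiplicity `1 = [1,1]`. -/
def Iv.one : Iv := ⟨1, 1, false⟩
/-- The multiplicity `? = [0,1]`. -/
def Iv.qmark : Iv := ⟨0, 1, false⟩
/-- The multiplicity `+ = [1,∞]`. -/
def Iv.iplus : Iv := ⟨1, ⊤, false⟩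
/-- The multiplicity `* = [0,∞]`. -/
def Iv.istar : Iv := ⟨0, ⊤, false⟩

/-- An atom `(a₁^{I₁} || ⋯ || a_k^{I_k})`: a list of symbols, each with a
multiplicity `1` (flag `true`) or `?` (flag `false`). -/
abbrev Atom (σ : Type u) : Type u := List (σ × Bool)

/-- A clause `(A₁^{I₁} | ⋯ | A_k^{I_k})`: a list of atoms with interval multiplicities. -/
abbrev Clause (σ : Type u) : Type u := List (Atom σ × Iv)

/-- A disjunctive interval multiplicity expression `(D₁^{I₁} || ⋯ || D_k^{I_k})`
(as raw syntax; well-formedness is `DIME.WF`). -/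
structure DIME (σ : Type u) : Type u where
  clauses : List (Clause σ × Iv)

/-- Language of a single symbol with its multiplicity (`1` or `?`) inside an atom. -/
def atomEntryLang {σ : Type u} [DecidableEq σ] (p : σ × Bool) : Set (UWord σ) :=
  if p.2 = true then {UWord.single p.1} else {UWord.single p.1, UWord.zero}

/-- Unordered concatenation of the languages of the items of a list. -/
def listConcLang {σ : Type u} {α : Type v} (f : α → Set (UWord σ)) :
    List α → Set (UWord σ)
  | [] => {UWord.zero}
  | x :: xs => {w | ∃ w₁ ∈ f x, ∃ w₂ ∈ listConcLang f xs, w = w₁.add w₂}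

/-- The language of an atom. -/
def Atom.lang {σ : Type u} [DecidableEq σ] (A : Atom σ) : Set (UWord σ) :=
  listConcLang atomEntryLang A

/-- The language `L(E^I)` obtained by iterating a language `L` according to
an interval multiplicity `I`. -/
def iterLang {σ : Type u} (L : Set (UWord σ)) (I : Iv) : Set (UWord σ) :=
  {w | (∃ l : List (UWord σ),
          (∀ x ∈ l, x ∈ L) ∧ I.lo ≤ l.length ∧ (l.length : ℕ∞) ≤ I.hi ∧ w = listSum l) ∨
       (I.opt = true ∧ w = UWord.zero)}

/-- The language of a clause: disjunction of its atoms with intervals. -/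
def Clause.lang {σ : Type u} [DecidableEq σ] (D : Clause σ) : Set (UWord σ) :=
  {w | ∃ p ∈ D, w ∈ iterLang (Atom.lang p.1) p.2}

/-- The language of a DIME: the unordered concatenation of its clauses with intervals. -/
def DIME.lang {σ : Type u} [DecidableEq σ] (E : DIME σ) : Set (UWord σ) :=
  listConcLang (fun p => iterLang (Clause.lang p.1) p.2) E.clauses

/-- A clause is simple if all its atoms carry multiplicity `1` or `?`. -/
def Clause.Simple {σ : Type u} (D : Clause σ) : Prop :=
  ∀ p ∈ D, p.2 = Iv.one ∨ p.2 = Iv.qmark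

/-- The list of all symbol occurrences in a DIME. -/
def DIME.symbols {σ : Type u} (E : DIME σ) : List σ :=
  E.clauses.flatMap fun p => p.1.flatMap fun q => q.1.map Prod.fst

/-- Well-formedness of a DIME `(D₁^{I₁} || ⋯ || D_k^{I_k})`: each `D_i` is either a
simple clause with `I_i ∈ {+,*}`, or a clause with `I_i ∈ {1,?}`; moreover no symbol
occurs twice in the whole expression. -/
def DIME.WF {σ : Type u} (E : DIME σ) : Prop :=
  (∀ p ∈ E.clauses,
      (Clause.Simple p.1 ∧ (p.2 = Iv.iplus ∨ p.2 = Iv.istar)) ∨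
      (p.2 = Iv.one ∨ p.2 = Iv.qmark)) ∧
  E.symbols.Nodup


/-!
The letter `a` occurs in at most one clause, and in at most one atom of it, so every other
component of the expression contributes a set of counts contained in `{0}`; such a set is
absorbed by union and by Minkowski sum with an interval set. An atom contributes counts in
`{0, 1}`, and iterating a language with counts `{1}` (resp. `{0, 1}`) according to `I` yields the
set of `I` (resp. its downward closure), again an interval possibly with `0` adjoined.
Iterating with `1` or `?` keeps that shape or adjoins `0`.
-/

open Pointwise

def Iv.toSet (I : Iv) : Set ℕ := {n | I.Mem n}

def IsIvSet (S : Set ℕ) : Prop := ∃ I : Iv, I.toSet = S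

lemma Iv.mem_toSet {I : Iv} {n : ℕ} : n ∈ I.toSet ↔ I.Mem n :=
  Iff.rfl

lemma Iv.mem_one {n : ℕ} : Iv.one.Mem n ↔ n = 1 := by
  simp only [Iv.Mem, Iv.one, Nat.cast_le_one, Bool.false_eq_true, false_and, or_false]
  omega

lemma Iv.mem_qmark {n : ℕ} : Iv.qmark.Mem n ↔ n ≤ 1 := by
  simp [Iv.Mem, Iv.qmark]

lemma Set.add_subset_left_of_subset_zero {α : Type*} [AddZeroClass α] {S T : Set α}
    (hT : T ⊆ {0}) : S + T ⊆ S := by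
  simpa using Set.add_subset_add_left (s := S) hT

lemma Set.add_subset_right_of_subset_zero {α : Type*} [AddZeroClass α] {S T : Set α}
    (hS : S ⊆ {0}) : S + T ⊆ T := by
  simpa using Set.add_subset_add_right (t := T) hS

namespace IsIvSet

variable {S T : Set ℕ}

lemma empty : IsIvSet ∅ :=
  ⟨⟨1, 0, false⟩, Set.eq_empty_of_forall_notMem fun n hn => by
    simp only [Iv.mem_toSet, Iv.Mem, nonpos_iff_eq_zero, Nat.cast_eq_zero, Bool.false_eq_true,
      false_and, or_false] at hn
    omega⟩

lemma zero : IsIvSet {0} :=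
  ⟨⟨0, 0, false⟩, by ext n; simp [Iv.mem_toSet, Iv.Mem]⟩

lemma of_subset_zero (h : S ⊆ {0}) : IsIvSet S := by
  rcases Set.subset_singleton_iff_eq.1 h with rfl | rfl
  exacts [empty, zero]

lemma union_zero (hS : IsIvSet S) : IsIvSet (S ∪ {0}) := by
  obtain ⟨I, rfl⟩ := hS
  refine ⟨⟨I.lo, I.hi, true⟩, Set.ext fun n => ?_⟩
  simp only [Iv.mem_toSet, Iv.Mem, true_and, Set.union_singleton, Set.mem_insert_iff]
  tauto

lemma union_of_subset_zero (hS : IsIvSet S) (hT : T ⊆ {0}) : IsIvSet (S ∪ T) := by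
  rcases Set.subset_singleton_iff_eq.1 hT with rfl | rfl
  · rwa [Set.union_empty]
  · exact hS.union_zero

lemma add_of_subset_zero (hS : IsIvSet S) (hT : T ⊆ {0}) : IsIvSet (S + T) := by
  rcases Set.subset_singleton_iff_eq.1 hT with rfl | rfl
  · rw [Set.add_empty]; exact empty
  · rwa [Set.singleton_zero, add_zero]

lemma lowerClosure (hS : IsIvSet S) : IsIvSet (lowerClosure S) := by
  obtain ⟨I, rfl⟩ := hS
  by_cases hI : (I.lo : ℕ∞) ≤ I.hi
  · refine ⟨⟨0, I.hi, false⟩, ?_⟩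
    ext k
    simp only [Iv.mem_toSet, Iv.Mem, zero_le, true_and, Bool.false_eq_true, false_and, or_false,
      SetLike.mem_coe, mem_lowerClosure]
    constructor
    · intro hk
      refine ⟨max k I.lo, Or.inl ⟨le_max_right _ _, ?_⟩, le_max_left _ _⟩
      rw [Nat.mono_cast.map_max]
      exact max_le hk hI
    · rintro ⟨n, ⟨-, hn⟩ | ⟨-, rfl⟩, hkn⟩
      · exact le_trans (by exact_mod_cast hkn) hn
      · simp [Nat.le_zero.1 hkn]
  · refine of_subset_zero ?_
    simp only [Set.subset_def, SetLike.mem_coe, mem_lowerClosure, Iv.mem_toSet, Iv.Mem]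
    rintro k ⟨n, ⟨hlo, hhi⟩ | ⟨-, rfl⟩, hkn⟩
    · exact absurd (le_trans (by exact_mod_cast hlo) hhi) hI
    · exact Nat.le_zero.1 hkn

end IsIvSet

def iterSums (C : Set ℕ) (I : Iv) : Set ℕ :=
  {k | ∃ ns : List ℕ, (∀ n ∈ ns, n ∈ C) ∧ I.Mem ns.length ∧ ns.sum = k}

section iterSums

variable {C : Set ℕ} {I : Iv}

lemma mem_iterSums {k : ℕ} :
    k ∈ iterSums C I ↔ ∃ ns : List ℕ, (∀ n ∈ ns, n ∈ C) ∧ I.Mem ns.length ∧ ns.sum = k :=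
  Iff.rfl

lemma iterSums_subset_zero (hC : C ⊆ {0}) : iterSums C I ⊆ {0} := by
  rintro _ ⟨ns, hns, -, rfl⟩
  exact List.sum_eq_zero fun n hn => hC (hns n hn)

lemma iterSums_one_eq_toSet : iterSums {1} I = I.toSet := by
  ext k
  constructor
  · rintro ⟨ns, hns, hlen, rfl⟩
    rw [List.eq_replicate_iff.2 ⟨rfl, hns⟩, List.sum_replicate, smul_eq_mul, mul_one]
    exact hlen
  · intro hk
    exact ⟨List.replicate k 1, by simp, by simpa [Iv.mem_toSet] using hk, by simp⟩

lemma iterSums_zero_one_eq_lowerClosure : iterSums {0, 1} I = lowerClosure I.toSet := by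
  ext k
  simp only [SetLike.mem_coe, mem_lowerClosure]
  constructor
  · rintro ⟨ns, hns, hlen, rfl⟩
    refine ⟨ns.length, hlen, ?_⟩
    simpa using List.sum_le_card_nsmul ns 1 fun n hn => by rcases hns n hn with rfl | rfl <;> simp
  · rintro ⟨n, hn, hkn⟩
    refine ⟨List.replicate k 1 ++ List.replicate (n - k) 0, fun m hm => ?_, ?_, by simp⟩
    · rcases List.mem_append.1 hm with h | h <;> simp [List.eq_of_mem_replicate h]
    · simpa [Nat.add_sub_cancel' hkn, Iv.mem_toSet] using hn

lemma isIvSet_iterSums (hC : C ⊆ Set.Iic 1) (I : Iv) : IsIvSet (iterSums C I) := by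
  have h01 : ∀ n ∈ C, n = 0 ∨ n = 1 := fun n hn => Nat.le_one_iff_eq_zero_or_eq_one.1 (hC hn)
  by_cases h1 : 1 ∈ C
  · by_cases h0 : 0 ∈ C
    · have hC01 : C = {0, 1} :=
        Set.Subset.antisymm h01 (Set.insert_subset h0 (Set.singleton_subset_iff.2 h1))
      rw [hC01, iterSums_zero_one_eq_lowerClosure]
      exact IsIvSet.lowerClosure ⟨I, rfl⟩
    · have hC1 : C = {1} := Set.Subset.antisymm
        (fun n hn => (h01 n hn).resolve_left fun h => h0 (h ▸ hn)) (Set.singleton_subset_iff.2 h1)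
      rw [hC1, iterSums_one_eq_toSet]
      exact ⟨I, rfl⟩
  · exact IsIvSet.of_subset_zero <| iterSums_subset_zero fun n hn =>
      (h01 n hn).resolve_right fun h => h1 (h ▸ hn)

lemma iterSums_one : iterSums C Iv.one = C := by
  ext k
  simp only [mem_iterSums, Iv.mem_one, List.length_eq_one_iff]
  constructor
  · rintro ⟨ns, hns, ⟨n, rfl⟩, rfl⟩
    simpa using hns
  · intro hk
    exact ⟨[k], by simpa using hk, ⟨k, rfl⟩, by simp⟩

lemma iterSums_qmark : iterSums C Iv.qmark = C ∪ {0} := by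
  ext k
  simp only [mem_iterSums, Iv.mem_qmark, Set.mem_union, Set.mem_singleton_iff]
  constructor
  · rintro ⟨_ | ⟨n, _ | ⟨m, ns⟩⟩, hns, hlen, rfl⟩
    · exact Or.inr rfl
    · exact Or.inl (by simpa using hns)
    · simp at hlen
  · rintro (hk | rfl)
    · exact ⟨[k], by simpa using hk, by simp, by simp⟩
    · exact ⟨[], by simp, by simp, rfl⟩

end iterSums

section Languages

variable {σ : Type u}

def counts (a : σ) (L : Set (UWord σ)) : Set ℕ := (fun w : UWord σ => w a) '' L

def Atom.symbols (A : Atom σ) : List σ := A.map Prod.fst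

def Clause.symbols (D : Clause σ) : List σ := D.flatMap fun q => Atom.symbols q.1

lemma listSum_apply (l : List (UWord σ)) (a : σ) : listSum l a = (l.map fun w => w a).sum := by
  induction l with
  | nil => rfl
  | cons x l ih => exact congrArg (x a + ·) ih

lemma counts_listConcLang_nil {α : Type v} (f : α → Set (UWord σ)) (a : σ) :
    counts a (listConcLang f []) = {0} :=
  Set.image_singleton

lemma counts_listConcLang_cons {α : Type v} (f : α → Set (UWord σ)) (x : α) (xs : List α)
    (a : σ) : counts a (listConcLang f (x :: xs)) = counts a (f x) + counts a (listConcLang f xs) := by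
  ext k
  constructor
  · rintro ⟨_, ⟨w₁, h₁, w₂, h₂, rfl⟩, rfl⟩
    exact ⟨w₁ a, ⟨w₁, h₁, rfl⟩, w₂ a, ⟨w₂, h₂, rfl⟩, rfl⟩
  · rintro ⟨_, ⟨w₁, h₁, rfl⟩, _, ⟨w₂, h₂, rfl⟩, rfl⟩
    exact ⟨w₁.add w₂, ⟨w₁, h₁, w₂, h₂, rfl⟩, rfl⟩

lemma counts_listConcLang_subset_zero {α : Type v} {f : α → Set (UWord σ)} {a : σ}
    {xs : List α} (h : ∀ x ∈ xs, counts a (f x) ⊆ {0}) : counts a (listConcLang f xs) ⊆ {0} := by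
  induction xs with
  | nil => exact (counts_listConcLang_nil f a).le
  | cons x xs ih =>
    rw [counts_listConcLang_cons]
    exact (Set.add_subset_left_of_subset_zero (ih fun y hy => h y (by simp [hy]))).trans
      (h x (by simp))

lemma mem_iterLang {L : Set (UWord σ)} {I : Iv} {w : UWord σ} :
    w ∈ iterLang L I ↔ ∃ l : List (UWord σ), (∀ x ∈ l, x ∈ L) ∧ I.Mem l.length ∧ w = listSum l := by
  constructor
  · rintro (⟨l, hl, hlo, hhi, rfl⟩ | ⟨hopt, rfl⟩)
    · exact ⟨l, hl, Or.inl ⟨hlo, hhi⟩, rfl⟩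
    · exact ⟨[], by simp, Or.inr ⟨hopt, rfl⟩, rfl⟩
  · rintro ⟨l, hl, ⟨hlo, hhi⟩ | ⟨hopt, hlen⟩, rfl⟩
    · exact Or.inl ⟨l, hl, hlo, hhi, rfl⟩
    · rw [List.length_eq_zero_iff.1 hlen]
      exact Or.inr ⟨hopt, rfl⟩

lemma counts_iterLang (L : Set (UWord σ)) (I : Iv) (a : σ) :
    counts a (iterLang L I) = iterSums (counts a L) I := by
  ext k
  constructor
  · rintro ⟨w, hw, rfl⟩
    obtain ⟨l, hl, hlen, rfl⟩ := mem_iterLang.1 hw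
    refine ⟨l.map fun w => w a, ?_, by simpa using hlen, (listSum_apply l a).symm⟩
    simp only [List.mem_map]
    rintro _ ⟨x, hx, rfl⟩
    exact ⟨x, hl x hx, rfl⟩
  · rintro ⟨ns, hns, hlen, rfl⟩
    have : Nonempty (UWord σ) := ⟨UWord.zero⟩
    choose! g hgL hga using hns
    refine ⟨listSum (ns.map g), mem_iterLang.2 ⟨ns.map g, by simpa using hgL, by simpa, rfl⟩, ?_⟩
    change listSum (ns.map g) a = ns.sum
    rw [listSum_apply, List.map_map]
    exact congrArg List.sum ((List.map_congr_left hga).trans (List.map_id' ns))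

lemma counts_iterLang_subset_zero {L : Set (UWord σ)} {a : σ} (h : counts a L ⊆ {0}) (I : Iv) :
    counts a (iterLang L I) ⊆ {0} :=
  counts_iterLang L I a ▸ iterSums_subset_zero h

variable [DecidableEq σ]

lemma UWord.single_apply (b a : σ) : UWord.single b a = if a = b then 1 else 0 := rfl

lemma eq_single_or_zero_of_mem_atomEntryLang {p : σ × Bool} {w : UWord σ}
    (h : w ∈ atomEntryLang p) : w = UWord.single p.1 ∨ w = UWord.zero := by
  unfold atomEntryLang at h
  split at h
  · exact Or.inl h
  · exact h

lemma counts_atomEntryLang_subset_Iic_one (p : σ × Bool) (a : σ) :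
    counts a (atomEntryLang p) ⊆ Set.Iic 1 := by
  rintro _ ⟨w, hw, rfl⟩
  rcases eq_single_or_zero_of_mem_atomEntryLang hw with rfl | rfl
  · change UWord.single p.1 a ≤ 1
    rw [UWord.single_apply]
    split <;> simp
  · exact Nat.zero_le 1

lemma counts_atomEntryLang_subset_zero {p : σ × Bool} {a : σ} (ha : a ≠ p.1) :
    counts a (atomEntryLang p) ⊆ {0} := by
  rintro _ ⟨w, hw, rfl⟩
  rcases eq_single_or_zero_of_mem_atomEntryLang hw with rfl | rfl
  · exact if_neg ha
  · rfl

lemma Atom.counts_lang_subset_zero {A : Atom σ} {a : σ} (ha : a ∉ A.symbols) :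
    counts a A.lang ⊆ {0} :=
  counts_listConcLang_subset_zero fun _ hp =>
    counts_atomEntryLang_subset_zero fun h => ha (h ▸ List.mem_map_of_mem hp)

lemma Atom.counts_lang_subset_Iic_one {A : Atom σ} (hnd : A.symbols.Nodup) (a : σ) :
    counts a A.lang ⊆ Set.Iic 1 := by
  induction A with
  | nil => simp [Atom.lang, counts_listConcLang_nil]
  | cons p A ih =>
    rw [Atom.symbols, List.map_cons, List.nodup_cons] at hnd
    rw [Atom.lang, counts_listConcLang_cons]
    by_cases hpa : a = p.1
    · subst hpa
      exact (Set.add_subset_left_of_subset_zero (Atom.counts_lang_subset_zero hnd.1)).trans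
        (counts_atomEntryLang_subset_Iic_one p _)
    · exact (Set.add_subset_right_of_subset_zero (counts_atomEntryLang_subset_zero hpa)).trans
        (ih hnd.2)

lemma Clause.counts_lang_nil (a : σ) : counts a (Clause.lang ([] : Clause σ)) = ∅ := by
  simp [counts, Clause.lang]

lemma Clause.counts_lang_cons (p : Atom σ × Iv) (D : Clause σ) (a : σ) :
    counts a (Clause.lang (p :: D)) = counts a (iterLang p.1.lang p.2) ∪ counts a D.lang := by
  rw [counts, counts, counts, ← Set.image_union]
  congr 1
  ext w
  simp [Clause.lang]

lemma Clause.counts_lang_subset_zero {D : Clause σ} {a : σ} (ha : a ∉ D.symbols) :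
    counts a D.lang ⊆ {0} := by
  rintro _ ⟨w, ⟨p, hp, hw⟩, rfl⟩
  refine counts_iterLang_subset_zero (Atom.counts_lang_subset_zero fun h => ?_) p.2 ⟨w, hw, rfl⟩
  exact ha (List.mem_flatMap.2 ⟨p, hp, h⟩)

lemma Clause.counts_lang_subset_Iic_one {D : Clause σ} (hs : D.Simple) (hnd : D.symbols.Nodup)
    (a : σ) : counts a D.lang ⊆ Set.Iic 1 := by
  rintro _ ⟨w, ⟨p, hp, hw⟩, rfl⟩
  have hA := Atom.counts_lang_subset_Iic_one ((List.nodup_flatMap.1 hnd).1 p hp) a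
  have hcount : w a ∈ iterSums (counts a p.1.lang) p.2 := counts_iterLang _ _ a ▸ ⟨w, hw, rfl⟩
  rcases hs p hp with h | h <;> rw [h] at hcount
  · rw [iterSums_one] at hcount
    exact hA hcount
  · rw [iterSums_qmark] at hcount
    exact Set.union_subset hA (by simp) hcount

lemma Clause.isIvSet_counts_lang {D : Clause σ} (hnd : D.symbols.Nodup) (a : σ) :
    IsIvSet (counts a D.lang) := by
  induction D with
  | nil => exact Clause.counts_lang_nil a ▸ IsIvSet.empty
  | cons p D ih =>
    rw [Clause.symbols, List.flatMap_cons, List.nodup_append] at hnd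
    obtain ⟨hnd_p, hnd_D, hdisj⟩ := hnd
    rw [Clause.counts_lang_cons, counts_iterLang]
    by_cases ha : a ∈ p.1.symbols
    · refine (isIvSet_iterSums ?_ p.2).union_of_subset_zero
        (Clause.counts_lang_subset_zero fun h => hdisj a ha a h rfl)
      exact Atom.counts_lang_subset_Iic_one hnd_p a
    · rw [Set.union_comm]
      exact (ih hnd_D).union_of_subset_zero
        (iterSums_subset_zero (Atom.counts_lang_subset_zero ha))

lemma Clause.isIvSet_counts_iterLang {D : Clause σ} {J : Iv}
    (hwf : (D.Simple ∧ (J = Iv.iplus ∨ J = Iv.istar)) ∨ (J = Iv.one ∨ J = Iv.qmark))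
    (hnd : D.symbols.Nodup) (a : σ) : IsIvSet (counts a (iterLang D.lang J)) := by
  rw [counts_iterLang]
  rcases hwf with ⟨hs, -⟩ | rfl | rfl
  · exact isIvSet_iterSums (Clause.counts_lang_subset_Iic_one hs hnd a) J
  · exact iterSums_one ▸ Clause.isIvSet_counts_lang hnd a
  · exact iterSums_qmark ▸ (Clause.isIvSet_counts_lang hnd a).union_zero

lemma isIvSet_counts_listConcLang_clauses {cs : List (Clause σ × Iv)}
    (hwf : ∀ p ∈ cs, (Clause.Simple p.1 ∧ (p.2 = Iv.iplus ∨ p.2 = Iv.istar)) ∨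
      (p.2 = Iv.one ∨ p.2 = Iv.qmark))
    (hnd : (cs.flatMap fun p => p.1.symbols).Nodup) (a : σ) :
    IsIvSet (counts a (listConcLang (fun p => iterLang (Clause.lang p.1) p.2) cs)) := by
  induction cs with
  | nil => exact counts_listConcLang_nil _ a ▸ IsIvSet.zero
  | cons p cs ih =>
    rw [List.flatMap_cons, List.nodup_append] at hnd
    obtain ⟨hnd_p, hnd_cs, hdisj⟩ := hnd
    rw [counts_listConcLang_cons]
    by_cases ha : a ∈ p.1.symbols
    · refine (Clause.isIvSet_counts_iterLang (hwf p (by simp)) hnd_p a).add_of_subset_zero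
        (counts_listConcLang_subset_zero fun q hq => counts_iterLang_subset_zero
          (Clause.counts_lang_subset_zero fun h => ?_) q.2)
      exact hdisj a ha a (List.mem_flatMap.2 ⟨q, hq, h⟩) rfl
    · rw [add_comm]
      exact (ih (fun q hq => hwf q (by simp [hq])) hnd_cs).add_of_subset_zero
        (counts_iterLang_subset_zero (Clause.counts_lang_subset_zero ha) p.2)

end Languages

theorem statement1_general {σ : Type} [DecidableEq σ]
    (E : DIME σ) (hE : E.WF) (a : σ) :
    ∃ I : Iv, ∀ k : ℕ, (∃ w ∈ DIME.lang E, w a = k) ↔ I.Mem k := by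
  obtain ⟨I, hI⟩ := isIvSet_counts_listConcLang_clauses hE.1 hE.2 a
  exact ⟨I, fun k => (Set.ext_iff.1 hI k).symm⟩

/-- For every DIME `E` over a finite alphabet `σ` and every symbol
`a ∈ σ`, the set `{w(a) | w ∈ L(E)} ⊆ ℕ` is representable by an interval possibly with
`0` added: it is of the form `{n,…,m}`, `{n, n+1, …}`, or such a set with `0` adjoined. -/
theorem statement1 {σ : Type} [DecidableEq σ] [Fintype σ]
    (E : DIME σ) (hE : E.WF) (a : σ) :
    ∃ I : Iv, ∀ k : ℕ, (∃ w ∈ DIME.lang E, w a = k) ↔ I.Mem k :=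
  statement1_general E hE a
end

section
/- For any two DIMEs E and E': L(E') ⊆ L(E) if and only if Δ_{E'} ≼ Δ_E. -/
set_option autoImplicit false

universe u v w

/-- Conflicting pairs of siblings `C_E` of a language of unordered words. -/
def Cset {σ : Type u} (L : Set (UWord σ)) : Set (σ × σ) :=
  {p | ∀ w ∈ L, ¬(w p.1 ≠ 0 ∧ w p.2 ≠ 0)}

/-- Extended cardinality map `N_E` of a language of unordered words. -/
def Nset {σ : Type u} (L : Set (UWord σ)) : Set (σ × ℕ) :=
  {p | ∃ w ∈ L, w p.1 = p.2}

/-- Collections of required symbols `P_E` of a language of unordered words. -/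
def Pset {σ : Type u} (L : Set (UWord σ)) : Set (Set σ) :=
  {X | ∀ w ∈ L, ∃ a ∈ X, w a ≠ 0}

/-- Counting dependencies `K_E` of a language of unordered words. -/
def Kset {σ : Type u} (L : Set (UWord σ)) : Set (σ × σ) :=
  {p | ∀ w ∈ L, w p.2 ≤ w p.1}

/-- Satisfaction `w ⊨ Δ_E` of the characterizing tuple `(C_E, N_E, P_E, K_E)`
of the language `L = L(E)` by an unordered word `w`. -/
def SatTuple {σ : Type u} (L : Set (UWord σ)) (w : UWord σ) : Prop :=
  (∀ p ∈ Cset L, ¬(w p.1 ≠ 0 ∧ w p.2 ≠ 0)) ∧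
  (∀ a : σ, (a, w a) ∈ Nset L) ∧
  (∀ X ∈ Pset L, ∃ a ∈ X, w a ≠ 0) ∧
  (∀ p ∈ Kset L, w p.2 ≤ w p.1)

/-- Subsumption `Δ_{E'} ≼ Δ_E` of characterizing tuples, for `L' = L(E')` and `L = L(E)`:
`C_E ⊆ C_{E'}`, `N_{E'} ⊆ N_E`, `P_E ⊆ P_{E'}`, and `K_E ⊆ K_{E'}`. -/
def TupleLE {σ : Type u} (L' L : Set (UWord σ)) : Prop :=
  Cset L ⊆ Cset L' ∧ Nset L' ⊆ Nset L ∧ Pset L ⊆ Pset L' ∧ Kset L ⊆ Kset L'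

/-!
A word satisfying `Δ_E` already lies in `L(E)`. Granting this, `L(E') ⊆ L(E)` follows from
`Δ_{E'} ≼ Δ_E`, because every word of `L(E')` satisfies `Δ_{E'}` and `≼` transfers satisfaction
from `Δ_{E'}` to `Δ_E`.

Since the clauses of `E` have disjoint symbols, a word satisfying `Δ_E` splits into its restrictions
to the clauses, each satisfying the tuple of its clause. For a clause iterated at most once, `C_E`
confines the word to the single atom `A` met by a witness from `N_E`. `K_E` forces the mandatory
symbols of `A` to occur equally often, and no less often than the optional ones. The witness from
`N_E` for a mandatory, or else a most frequent, symbol then shows that this count is an allowed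
multiplicity of `A`. For a simple clause under `+` or `*`, the same `K_E` constraints make the
restriction to each atom a power of that atom, and these powers add up to an iteration of the
clause.
-/

open scoped Pointwise

namespace UWord

variable {σ : Type*}

instance : AddCommMonoid (UWord σ) := inferInstanceAs (AddCommMonoid (σ → ℕ))

@[simp] lemma add_apply (u v : UWord σ) (a : σ) : (u + v) a = u a + v a := rfl

@[simp] lemma zero_apply (a : σ) : (0 : UWord σ) a = 0 := rfl

lemma zero_eq : (UWord.zero : UWord σ) = 0 := rfl

lemma add_eq (u v : UWord σ) : u.add v = u + v := rfl

@[ext] lemma ext {u v : UWord σ} (h : ∀ a, u a = v a) : u = v := funext h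

def supportedIn (S : Set σ) : AddSubmonoid (UWord σ) where
  carrier := {u | ∀ a ∉ S, u a = 0}
  zero_mem' _ _ := rfl
  add_mem' hu hv a ha := by simp [hu a ha, hv a ha]

def countLE (a b : σ) : AddSubmonoid (UWord σ) where
  carrier := {u | u b ≤ u a}
  zero_mem' := le_refl (0 : ℕ)
  add_mem' {u v} (hu : u b ≤ u a) (hv : v b ≤ v a) := add_le_add hu hv

noncomputable def restrict (S : Set σ) (w : UWord σ) : UWord σ := S.indicator w

@[simp] lemma restrict_apply_of_mem {S : Set σ} {a : σ} (ha : a ∈ S) (w : UWord σ) :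
    restrict S w a = w a :=
  Set.indicator_of_mem ha w

@[simp] lemma restrict_apply_of_notMem {S : Set σ} {a : σ} (ha : a ∉ S) (w : UWord σ) :
    restrict S w a = 0 :=
  Set.indicator_of_notMem ha w

lemma restrict_add_restrict_compl (S : Set σ) (w : UWord σ) :
    restrict S w + restrict Sᶜ w = w :=
  Set.indicator_self_add_compl S w

lemma restrict_apply (S : Set σ) (w : UWord σ) (a : σ) [Decidable (a ∈ S)] :
    restrict S w a = if a ∈ S then w a else 0 :=
  Set.indicator_apply S w a

lemma restrict_restrict_of_subset {S T : Set σ} (h : S ⊆ T) (w : UWord σ) :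
    restrict S (restrict T w) = restrict S w := by
  ext a
  by_cases ha : a ∈ S
  · simp [ha, h ha]
  · simp [ha]

lemma mem_supportedIn {S : Set σ} {u : UWord σ} : u ∈ supportedIn S ↔ ∀ a ∉ S, u a = 0 :=
  Iff.rfl

lemma mem_countLE {a b : σ} {u : UWord σ} : u ∈ countLE a b ↔ u b ≤ u a := Iff.rfl

end UWord

open UWord

section Languages

variable {σ : Type*}

lemma listSum_eq_sum (l : List (UWord σ)) : listSum l = l.sum := by
  induction l with
  | nil => rfl
  | cons x l ih => rw [List.sum_cons, ← ih]; rfl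

lemma listConcLang_nil {α : Type*} (f : α → Set (UWord σ)) : listConcLang f [] = {0} := rfl

lemma listConcLang_cons {α : Type*} (f : α → Set (UWord σ)) (x : α) (l : List α) :
    listConcLang f (x :: l) = f x + listConcLang f l := by
  ext w
  simp only [listConcLang, Set.mem_ofPred_eq, Set.mem_add, UWord.add_eq, eq_comm]

lemma listConcLang_subset {α : Type*} {f : α → Set (UWord σ)} {M : AddSubmonoid (UWord σ)}
    {l : List α} (h : ∀ x ∈ l, f x ⊆ M) : listConcLang f l ⊆ M := by
  induction l with
  | nil => simp [listConcLang_nil]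
  | cons x l ih =>
    rw [listConcLang_cons]
    rintro _ ⟨u, hu, v, hv, rfl⟩
    exact M.add_mem (h x (by simp) hu) (ih (fun y hy => h y (by simp [hy])) hv)

lemma iterLang_subset {L : Set (UWord σ)} {M : AddSubmonoid (UWord σ)} (h : L ⊆ M) (I : Iv) :
    iterLang L I ⊆ M := by
  rintro _ (⟨l, hl, -, -, rfl⟩ | ⟨-, rfl⟩)
  · rw [listSum_eq_sum]
    exact M.list_sum_mem fun x hx => h (hl x hx)
  · exact M.zero_mem

lemma mem_nsmul_iff_exists_list {L : Set (UWord σ)} {n : ℕ} {w : UWord σ} :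
    w ∈ n • L ↔ ∃ l : List (UWord σ), (∀ x ∈ l, x ∈ L) ∧ l.length = n ∧ l.sum = w := by
  induction n generalizing w with
  | zero =>
    constructor
    · rintro rfl; exact ⟨[], by simp⟩
    · rintro ⟨l, -, hl, rfl⟩; simp [List.length_eq_zero_iff.1 hl]
  | succ n ih =>
    rw [succ_nsmul', Set.mem_add]
    constructor
    · rintro ⟨x, hx, v, hv, rfl⟩
      obtain ⟨l, hl, rfl, rfl⟩ := ih.1 hv
      exact ⟨x :: l, by simpa [hx] using hl, rfl, rfl⟩
    · rintro ⟨_ | ⟨x, l⟩, hl, hlen, rfl⟩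
      · simp at hlen
      · simp only [List.mem_cons, forall_eq_or_imp] at hl
        exact ⟨x, hl.1, l.sum, ih.2 ⟨l, hl.2, by simpa using hlen, rfl⟩, rfl⟩

lemma mem_iterLang_iff {L : Set (UWord σ)} {I : Iv} {w : UWord σ} :
    w ∈ iterLang L I ↔ ∃ n, I.Mem n ∧ w ∈ n • L := by
  simp only [mem_nsmul_iff_exists_list]
  constructor
  · rintro (⟨l, hl, hlo, hhi, rfl⟩ | ⟨hopt, rfl⟩)
    · exact ⟨l.length, Or.inl ⟨hlo, hhi⟩, l, hl, rfl, (listSum_eq_sum l).symm⟩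
    · exact ⟨0, Or.inr ⟨hopt, rfl⟩, [], by simp, rfl, rfl⟩
  · rintro ⟨n, (⟨hlo, hhi⟩ | ⟨hopt, rfl⟩), l, hl, hlen, rfl⟩
    · exact Or.inl ⟨l, hl, hlen ▸ hlo, hlen ▸ hhi, listSum_eq_sum l⟩
    · exact Or.inr ⟨hopt, by rw [List.length_eq_zero_iff.1 hlen]; rfl⟩

lemma mem_iterLang_of_mem {L : Set (UWord σ)} {I : Iv} (hI : I.Mem 1) {w : UWord σ}
    (hw : w ∈ L) : w ∈ iterLang L I :=
  mem_iterLang_iff.2 ⟨1, hI, by rwa [one_nsmul]⟩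

lemma iterLang_subset_insert_zero {L : Set (UWord σ)} {I : Iv} (hhi : I.hi ≤ 1) :
    iterLang L I ⊆ insert 0 L := by
  intro w hw
  obtain ⟨n, hn, hw⟩ := mem_iterLang_iff.1 hw
  have hn1 : n ≤ 1 := by
    rcases hn with ⟨-, hn⟩ | ⟨-, rfl⟩
    · exact_mod_cast hn.trans hhi
    · exact zero_le_one
  interval_cases n
  · exact Or.inl (by simpa using hw)
  · exact Or.inr (by simpa using hw)

lemma mem_iterLang_of_mem_closure {L : Set (UWord σ)} {I : Iv} (hlo : I.lo ≤ 1) (hhi : I.hi = ⊤)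
    {w : UWord σ} (hw : w ∈ AddSubmonoid.closure L) (hw0 : w ≠ 0) : w ∈ iterLang L I := by
  obtain ⟨l, hl, rfl⟩ := AddSubmonoid.exists_list_of_mem_closure hw
  have hlen : 1 ≤ l.length := List.length_pos_iff.2 fun h => hw0 (by simp [h])
  exact Or.inl ⟨l, hl, hlo.trans hlen, by simp [hhi], listSum_eq_sum l⟩

end Languages

section Tuple

variable {σ : Type*}

def TupleClosed (L : Set (UWord σ)) : Prop := ∀ w, SatTuple L w → w ∈ L

lemma satTuple_of_mem {L : Set (UWord σ)} {w : UWord σ} (hw : w ∈ L) : SatTuple L w :=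
  ⟨fun _ hp => hp w hw, fun _ => ⟨w, hw, rfl⟩, fun _ hX => hX w hw, fun _ hp => hp w hw⟩

lemma SatTuple.of_tupleLE {L' L : Set (UWord σ)} (h : TupleLE L' L) {w : UWord σ}
    (hw : SatTuple L' w) : SatTuple L w :=
  ⟨fun p hp => hw.1 p (h.1 hp), fun a => h.2.1 (hw.2.1 a), fun X hX => hw.2.2.1 X (h.2.2.1 hX),
    fun p hp => hw.2.2.2 p (h.2.2.2 hp)⟩

lemma tupleLE_of_subset {L' L : Set (UWord σ)} (h : L' ⊆ L) : TupleLE L' L :=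
  ⟨fun _ hp w hw => hp w (h hw), fun _ ⟨w, hw, hwa⟩ => ⟨w, h hw, hwa⟩,
    fun _ hX w hw => hX w (h hw), fun _ hp w hw => hp w (h hw)⟩

lemma TupleClosed.subset_iff_tupleLE {L : Set (UWord σ)} (hL : TupleClosed L) {L' : Set (UWord σ)} :
    L' ⊆ L ↔ TupleLE L' L :=
  ⟨tupleLE_of_subset, fun h w hw => hL w ((satTuple_of_mem hw).of_tupleLE h)⟩

lemma SatTuple.nonempty {L : Set (UWord σ)} {w : UWord σ} (hw : SatTuple L w) : L.Nonempty := by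
  by_contra hL
  obtain ⟨a, ha, -⟩ := hw.2.2.1 ∅ fun u hu => (hL ⟨u, hu⟩).elim
  exact ha

lemma SatTuple.zero_mem {L : Set (UWord σ)} (h : SatTuple L 0) : 0 ∈ L := by
  by_contra h0
  have huniv : Set.univ ∈ Pset L := fun u hu => by
    by_contra! hu0
    exact h0 (by convert hu; ext a; simpa using (hu0 a trivial).symm)
  obtain ⟨a, -, ha⟩ := h.2.2.1 _ huniv
  exact ha rfl

lemma SatTuple.mem_supportedIn {L : Set (UWord σ)} {S : Set σ} (hL : L ⊆ supportedIn S)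
    {w : UWord σ} (hw : SatTuple L w) : w ∈ supportedIn S := fun a ha => by
  obtain ⟨u, hu, hua : u a = w a⟩ := hw.2.1 a
  exact hua ▸ hL hu a ha

lemma SatTuple.le_of_subset_countLE {L : Set (UWord σ)} {a b : σ} (hL : L ⊆ countLE a b)
    {w : UWord σ} (hw : SatTuple L w) : w b ≤ w a :=
  hw.2.2.2 (a, b) fun _ hu => hL hu

lemma SatTuple.restrict_of_add {L₁ L₂ : Set (UWord σ)} {S : Set σ} (h₁ : L₁ ⊆ supportedIn S)
    (h₂ : L₂ ⊆ supportedIn Sᶜ) {w : UWord σ} (hw : SatTuple (L₁ + L₂) w) :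
    SatTuple L₁ (restrict S w) := by
  obtain ⟨⟨u₀, hu₀⟩, -⟩ := Set.add_nonempty.1 hw.nonempty
  have h₂S : ∀ v ∈ L₂, ∀ a ∈ S, v a = 0 := fun v hv a ha => h₂ hv a (not_not_intro ha)
  obtain ⟨hC, hN, hP, hK⟩ := hw
  refine ⟨?_, fun a => ?_, fun X hX => ?_, ?_⟩
  · rintro ⟨a, b⟩ hab ⟨ha, hb⟩
    have haS : a ∈ S := by_contra fun h => ha (by simp [h])
    have hbS : b ∈ S := by_contra fun h => hb (by simp [h])
    refine hC (a, b) ?_ ⟨by simpa [haS] using ha, by simpa [hbS] using hb⟩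
    rintro _ ⟨u, hu, v, hv, rfl⟩
    simpa [h₂S v hv a haS, h₂S v hv b hbS] using hab u hu
  · by_cases ha : a ∈ S
    · obtain ⟨_, ⟨u, hu, v, hv, rfl⟩, huv⟩ := hN a
      exact ⟨u, hu, by simpa [ha, h₂S v hv a ha] using huv⟩
    · exact ⟨u₀, hu₀, by simp [ha, h₁ hu₀ a ha]⟩
  · have hXS : X ∩ S ∈ Pset (L₁ + L₂) := by
      rintro _ ⟨u, hu, v, hv, rfl⟩
      obtain ⟨a, haX, ha⟩ := hX u hu
      have haS : a ∈ S := by_contra fun h => ha (h₁ hu a h)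
      exact ⟨a, ⟨haX, haS⟩, by simp [ha]⟩
    obtain ⟨a, ⟨haX, haS⟩, hwa⟩ := hP _ hXS
    exact ⟨a, haX, by simpa [haS] using hwa⟩
  · rintro ⟨a, b⟩ hab
    by_cases hbS : b ∈ S
    swap
    · simp [hbS]
    by_cases haS : a ∈ S
    · simpa [haS, hbS] using hK (a, b) (by
        rintro _ ⟨u, hu, v, hv, rfl⟩
        simpa [h₂S v hv a haS, h₂S v hv b hbS] using hab u hu)
    · -- no word of `L₁ + L₂` contains `b`, so neither does `w`
      have hb : w b = 0 := by
        by_contra hwb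
        refine hC (b, b) ?_ ⟨hwb, hwb⟩
        rintro _ ⟨u, hu, v, hv, rfl⟩ ⟨hb, -⟩
        have := hab u hu
        simp_all [h₁ hu a haS]
      simp [hbS, hb]

end Tuple

section Shuffle

open Function

variable {σ α : Type*}

lemma supportedIn_mono {S T : Set σ} (h : S ⊆ T) : supportedIn S ≤ supportedIn T :=
  fun _ hu a ha => hu a fun haS => ha (h haS)

lemma restrict_add_of_mem_supportedIn {S : Set σ} {u v : UWord σ} (hu : u ∈ supportedIn S)
    (hv : v ∈ supportedIn Sᶜ) : restrict S (u + v) = u := by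
  ext a
  by_cases ha : a ∈ S
  · simp [ha, hv a (not_not_intro ha)]
  · simp [ha, hu a ha]

lemma mem_add_iff_restrict {L₁ L₂ : Set (UWord σ)} {S : Set σ} (h₁ : L₁ ⊆ supportedIn S)
    (h₂ : L₂ ⊆ supportedIn Sᶜ) {w : UWord σ} :
    w ∈ L₁ + L₂ ↔ restrict S w ∈ L₁ ∧ restrict Sᶜ w ∈ L₂ := by
  constructor
  · rintro ⟨u, hu, v, hv, rfl⟩
    dsimp only
    have hu' : u ∈ supportedIn Sᶜᶜ := by simpa using h₁ hu
    rw [restrict_add_of_mem_supportedIn (h₁ hu) (h₂ hv), add_comm u v,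
      restrict_add_of_mem_supportedIn (h₂ hv) hu']
    exact ⟨hu, hv⟩
  · rintro ⟨hw₁, hw₂⟩
    exact ⟨_, hw₁, _, hw₂, restrict_add_restrict_compl S w⟩

lemma TupleClosed.add {L₁ L₂ : Set (UWord σ)} {S : Set σ} (h₁ : L₁ ⊆ supportedIn S)
    (h₂ : L₂ ⊆ supportedIn Sᶜ) (hc₁ : TupleClosed L₁) (hc₂ : TupleClosed L₂) :
    TupleClosed (L₁ + L₂) := by
  intro w hw
  have h₁' : L₁ ⊆ supportedIn Sᶜᶜ := by rwa [compl_compl]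
  rw [mem_add_iff_restrict h₁ h₂]
  exact ⟨hc₁ _ (hw.restrict_of_add h₁ h₂),
    hc₂ _ (SatTuple.restrict_of_add h₂ h₁' (add_comm L₁ L₂ ▸ hw))⟩

lemma listConcLang_subset_supportedIn {f : α → Set (UWord σ)} {S : α → Set σ} {l : List α}
    (hsupp : ∀ x ∈ l, f x ⊆ supportedIn (S x)) :
    listConcLang f l ⊆ supportedIn (⋃ x ∈ l, S x) :=
  listConcLang_subset fun x hx =>
    (hsupp x hx).trans (supportedIn_mono (Set.subset_biUnion_of_mem (u := S) hx))

lemma TupleClosed.listConcLang {f : α → Set (UWord σ)} {S : α → Set σ} {l : List α}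
    (hsupp : ∀ x ∈ l, f x ⊆ supportedIn (S x)) (hdisj : l.Pairwise (Disjoint on S))
    (hcl : ∀ x ∈ l, TupleClosed (f x)) : TupleClosed (listConcLang f l) := by
  induction l with
  | nil =>
    intro w hw
    have hw0 := hw.mem_supportedIn (S := ∅) (by simp [listConcLang_nil])
    exact UWord.ext fun a => hw0 a (Set.notMem_empty a)
  | cons x l ih =>
    obtain ⟨hx, hl⟩ := List.pairwise_cons.1 hdisj
    rw [listConcLang_cons]
    refine TupleClosed.add (hsupp x (by simp)) ?_ (hcl x (by simp))
      (ih (fun y hy => hsupp y (by simp [hy])) hl fun y hy => hcl y (by simp [hy]))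
    exact (listConcLang_subset_supportedIn fun y hy => hsupp y (by simp [hy])).trans
      (supportedIn_mono (Set.iUnion₂_subset fun y hy => (hx y hy).le_compl_left))

lemma mem_listConcLang_iff {f : α → Set (UWord σ)} {S : α → Set σ} {l : List α}
    (hsupp : ∀ x ∈ l, f x ⊆ supportedIn (S x)) (hdisj : l.Pairwise (Disjoint on S))
    {w : UWord σ} :
    w ∈ listConcLang f l ↔
      (∀ x ∈ l, restrict (S x) w ∈ f x) ∧ ∀ a, (∀ x ∈ l, a ∉ S x) → w a = 0 := by
  classical
  induction l generalizing w with
  | nil => simp [listConcLang_nil, UWord.ext_iff]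
  | cons x l ih =>
    obtain ⟨hx, hl⟩ := List.pairwise_cons.1 hdisj
    have hlx : ∀ y ∈ l, S y ⊆ (S x)ᶜ := fun y hy => (hx y hy).le_compl_left
    have hrest : listConcLang f l ⊆ supportedIn (S x)ᶜ :=
      (listConcLang_subset_supportedIn fun y hy => hsupp y (by simp [hy])).trans
        (supportedIn_mono (Set.iUnion₂_subset hlx))
    rw [listConcLang_cons, mem_add_iff_restrict (hsupp x (by simp)) hrest,
      ih (fun y hy => hsupp y (by simp [hy])) hl]
    have hres : ∀ y ∈ l, restrict (S y) (restrict (S x)ᶜ w) = restrict (S y) w :=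
      fun y hy => restrict_restrict_of_subset (hlx y hy) w
    simp only [List.forall_mem_cons, restrict_apply, Set.mem_compl_iff, ite_eq_right_iff]
    constructor
    · rintro ⟨hwx, hwl, hw0⟩
      exact ⟨⟨hwx, fun y hy => hres y hy ▸ hwl y hy⟩, fun a ha => hw0 a ha.2 ha.1⟩
    · rintro ⟨⟨hwx, hwl⟩, hw0⟩
      exact ⟨hwx, fun y hy => (hres y hy).symm ▸ hwl y hy, fun a ha hax => hw0 a ⟨hax, ha⟩⟩

end Shuffle

namespace Atom

variable {σ : Type*}

def symbols_s4 (A : Atom σ) : List σ := A.map Prod.fst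

def HasCounts (A : Atom σ) (n : ℕ) (w : UWord σ) : Prop :=
  (∀ a, (a, true) ∈ A → w a = n) ∧ (∀ p ∈ A, w p.1 ≤ n) ∧ w ∈ supportedIn {a | a ∈ symbols_s4 A}

lemma HasCounts.add {A : Atom σ} {m n : ℕ} {u v : UWord σ} (hu : HasCounts A m u)
    (hv : HasCounts A n v) : HasCounts A (m + n) (u + v) :=
  ⟨fun a ha => by simp [hu.1 a ha, hv.1 a ha], fun p hp => add_le_add (hu.2.1 p hp) (hv.2.1 p hp),
    add_mem hu.2.2 hv.2.2⟩

lemma hasCounts_zero_iff {A : Atom σ} {w : UWord σ} : HasCounts A 0 w ↔ w = 0 := by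
  constructor
  · rintro ⟨-, hle, hsupp⟩
    ext a
    by_cases ha : a ∈ symbols_s4 A
    · obtain ⟨p, hp, rfl⟩ := List.mem_map.1 ha
      exact Nat.le_zero.1 (hle p hp)
    · exact hsupp a ha
  · rintro rfl
    exact ⟨fun _ _ => rfl, fun _ _ => le_rfl, zero_mem _⟩

lemma HasCounts.le {A : Atom σ} {n : ℕ} {w : UWord σ} (hw : HasCounts A n w) (a : σ) : w a ≤ n := by
  by_cases ha : a ∈ symbols_s4 A
  · obtain ⟨p, hp, rfl⟩ := List.mem_map.1 ha
    exact hw.2.1 p hp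
  · simp [hw.2.2 a ha]

lemma hasCounts_of_required {A : Atom σ} {a : σ} (ha : (a, true) ∈ A) {w : UWord σ}
    (hK : ∀ a c, (a, true) ∈ A → c ∈ symbols_s4 A → w c ≤ w a)
    (hsupp : w ∈ supportedIn {a | a ∈ symbols_s4 A}) : HasCounts A (w a) w := by
  have hmem : ∀ p ∈ A, p.1 ∈ symbols_s4 A := fun p hp => List.mem_map_of_mem hp
  exact ⟨fun b hb => le_antisymm (hK a b ha (hmem _ hb)) (hK b a hb (hmem _ ha)),
    fun p hp => hK a p.1 ha (hmem p hp), hsupp⟩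

lemma exists_hasCounts {A : Atom σ} {w : UWord σ}
    (hK : ∀ a c, (a, true) ∈ A → c ∈ symbols_s4 A → w c ≤ w a)
    (hsupp : w ∈ supportedIn {a | a ∈ symbols_s4 A}) : ∃ n, HasCounts A n w := by
  obtain ⟨a, ha⟩ | hreq := em (∃ a, (a, true) ∈ A)
  · exact ⟨w a, hasCounts_of_required ha hK hsupp⟩
  · refine ⟨((symbols_s4 A).map w).sum, fun a ha => (hreq ⟨a, ha⟩).elim, fun p hp => ?_, hsupp⟩
    exact List.le_sum_of_mem (List.mem_map_of_mem (List.mem_map_of_mem hp))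

/-- The iteration count of `w` on `A` is read off a single witness: one for a mandatory symbol,
or, if there is none, one for a symbol occurring most often in `w`. -/
lemma exists_hasCounts_of_witness {A : Atom σ} {P : ℕ → Prop} {w : UWord σ} {a₀ : σ}
    (ha₀ : a₀ ∈ symbols_s4 A) (hwa₀ : w a₀ ≠ 0)
    (hK : ∀ a c, (a, true) ∈ A → c ∈ symbols_s4 A → w c ≤ w a)
    (hsupp : w ∈ supportedIn {a | a ∈ symbols_s4 A})
    (hwit : ∀ c ∈ symbols_s4 A, w c ≠ 0 → ∃ n u, P n ∧ HasCounts A n u ∧ u c = w c) :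
    ∃ n, P n ∧ HasCounts A n w := by
  classical
  obtain ⟨a, ha⟩ | hreq := em (∃ a, (a, true) ∈ A)
  · have haA : a ∈ symbols_s4 A := List.mem_map_of_mem ha
    obtain ⟨n, u, hn, hun, hua⟩ := hwit a haA (by have := hK a a₀ ha ha₀; omega)
    exact ⟨n, hn, hun.1 a ha ▸ hua ▸ hasCounts_of_required ha hK hsupp⟩
  · obtain ⟨a, haA, hmax⟩ := (symbols_s4 A).toFinset.exists_max_image w ⟨a₀, by simpa using ha₀⟩
    simp only [List.mem_toFinset] at haA hmax
    obtain ⟨n, u, hn, hun, hua⟩ := hwit a haA (by have := hmax a₀ ha₀; omega)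
    refine ⟨n, hn, fun b hb => (hreq ⟨b, hb⟩).elim, fun p hp => ?_, hsupp⟩
    exact (hmax p.1 (List.mem_map_of_mem hp)).trans (hua ▸ hun.le a)

variable [DecidableEq σ]

lemma atomEntryLang_subset (p : σ × Bool) : atomEntryLang p ⊆ supportedIn {p.1} := by
  have hsingle : UWord.single p.1 ∈ supportedIn {p.1} := fun a ha => if_neg ha
  unfold atomEntryLang
  split_ifs
  · exact Set.singleton_subset_iff.2 hsingle
  · exact Set.insert_subset hsingle (Set.singleton_subset_iff.2 (zero_mem _))

lemma restrict_singleton_mem_atomEntryLang_iff (a : σ) (b : Bool) (w : UWord σ) :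
    restrict {a} w ∈ atomEntryLang (a, b) ↔ (b = true → w a = 1) ∧ w a ≤ 1 := by
  have hsingle : restrict {a} w = UWord.single a ↔ w a = 1 := by
    refine ⟨fun h => by simpa [UWord.single] using congrFun h a, fun h => ?_⟩
    ext c
    by_cases hc : c = a <;> simp [UWord.single, hc, h]
  have hzero : restrict {a} w = 0 ↔ w a = 0 := by
    refine ⟨fun h => by simpa using congrFun h a, fun h => ?_⟩
    ext c
    by_cases hc : c = a <;> simp [hc, h]
  cases b <;> simp [atomEntryLang, hsingle, hzero, UWord.zero_eq] <;> omega

open Function in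
lemma mem_lang_iff {A : Atom σ} (hA : (symbols_s4 A).Nodup) {w : UWord σ} :
    w ∈ Atom.lang A ↔ HasCounts A 1 w := by
  have hdisj : A.Pairwise (Disjoint on fun p : σ × Bool => ({p.1} : Set σ)) :=
    (List.pairwise_map.1 hA).imp Set.disjoint_singleton.2
  rw [Atom.lang, mem_listConcLang_iff (fun p _ => atomEntryLang_subset p) hdisj]
  simp only [HasCounts, Prod.forall, restrict_singleton_mem_atomEntryLang_iff, mem_supportedIn,
    symbols_s4, List.mem_map, Set.mem_singleton_iff, Set.mem_ofPred_eq]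
  constructor
  · rintro ⟨h, hsupp⟩
    exact ⟨fun a ha => (h a true ha).1 rfl, fun a b hab => (h a b hab).2,
      fun a ha => hsupp a fun c b hcb hac => ha ⟨(c, b), hcb, hac.symm⟩⟩
  · rintro ⟨hreq, hle, hsupp⟩
    exact ⟨fun a b hab => ⟨fun hb => hreq a (hb ▸ hab), hle a b hab⟩,
      fun a ha => hsupp a fun ⟨⟨c, b⟩, hcb, hca⟩ => ha c b hcb hca.symm⟩

lemma mem_nsmul_lang_iff {A : Atom σ} (hA : (symbols_s4 A).Nodup) {n : ℕ} {w : UWord σ} :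
    w ∈ n • Atom.lang A ↔ HasCounts A n w := by
  induction n generalizing w with
  | zero => rw [zero_nsmul, Set.mem_zero, hasCounts_zero_iff]
  | succ n ih =>
    rw [succ_nsmul', Set.mem_add]
    constructor
    · rintro ⟨u, hu, v, hv, rfl⟩
      simpa [add_comm] using ((mem_lang_iff hA).1 hu).add (ih.1 hv)
    · intro hw
      -- split off the layer of the symbols that occur `n + 1` times
      let top : UWord σ := fun a => if n < w a then 1 else 0
      let rest : UWord σ := fun a => min (w a) n
      have htop : HasCounts A 1 top :=
        ⟨fun a ha => by simp [top, hw.1 a ha], fun p _ => by dsimp only [top]; split <;> omega,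
          fun a ha => by simp [top, hw.2.2 a ha]⟩
      have hrest : HasCounts A n rest :=
        ⟨fun a ha => by simp [rest, hw.1 a ha], fun p _ => min_le_right _ _,
          fun a ha => by simp [rest, hw.2.2 a ha]⟩
      refine ⟨top, (mem_lang_iff hA).2 htop, rest, ih.2 hrest, UWord.ext fun a => ?_⟩
      show (if n < w a then 1 else 0) + min (w a) n = w a
      have := hw.le a
      split <;> omega

lemma mem_iterLang_lang_iff {A : Atom σ} (hA : (symbols_s4 A).Nodup) {I : Iv} {w : UWord σ} :
    w ∈ iterLang (Atom.lang A) I ↔ ∃ n, I.Mem n ∧ HasCounts A n w := by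
  simp only [mem_iterLang_iff, mem_nsmul_lang_iff hA]

lemma lang_subset_supportedIn (A : Atom σ) : Atom.lang A ⊆ supportedIn {a | a ∈ symbols_s4 A} :=
  listConcLang_subset fun p hp => (atomEntryLang_subset p).trans
    (supportedIn_mono (Set.singleton_subset_iff.2 (List.mem_map_of_mem hp)))


end Atom


lemma eq_of_nodup_flatMap {α β : Type*} {l : List α} {f : α → List β} (h : (l.flatMap f).Nodup)
    {x y : α} (hx : x ∈ l) (hy : y ∈ l) {b : β} (hbx : b ∈ f x) (hby : b ∈ f y) : x = y := by
  have : Std.Symm (Function.onFun List.Disjoint f) := ⟨fun _ _ hxy => hxy.symm⟩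
  by_contra hne
  exact (List.nodup_flatMap.1 h).2.forall hx hy hne hbx hby

open Function in
lemma pairwise_disjoint_of_nodup_flatMap {α β : Type*} {l : List α} {f : α → List β}
    (h : (l.flatMap f).Nodup) : l.Pairwise (Disjoint on fun x => {b | b ∈ f x}) :=
  (List.nodup_flatMap.1 h).2.imp fun hxy => Set.disjoint_left.2 fun _ h₁ h₂ => hxy h₁ h₂

namespace Clause

variable {σ : Type*}

def symbols_s4 (D : Clause σ) : List σ := D.flatMap fun q => Atom.symbols_s4 q.1

lemma nodup_atom_symbols {D : Clause σ} (hD : (symbols_s4 D).Nodup) {A : Atom σ} {I : Iv}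
    (hAD : (A, I) ∈ D) : (Atom.symbols_s4 A).Nodup :=
  (List.nodup_flatMap.1 hD).1 _ hAD

variable [DecidableEq σ]

lemma lang_subset_supportedIn (D : Clause σ) : Clause.lang D ⊆ supportedIn {a | a ∈ symbols_s4 D} := by
  rintro u ⟨⟨A, I⟩, hAD, hu⟩
  refine supportedIn_mono ?_ (iterLang_subset (Atom.lang_subset_supportedIn A) I hu)
  intro a ha
  exact List.mem_flatMap.2 ⟨(A, I), hAD, ha⟩

lemma exists_atom_of_mem_lang {D : Clause σ} {u : UWord σ} (hu : u ∈ Clause.lang D) {c : σ}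
    (hc : u c ≠ 0) :
    ∃ A I, (A, I) ∈ D ∧ c ∈ Atom.symbols_s4 A ∧ u ∈ iterLang (Atom.lang A) I := by
  obtain ⟨⟨A, I⟩, hAD, huA⟩ := hu
  refine ⟨A, I, hAD, by_contra fun hcA => hc ?_, huA⟩
  exact iterLang_subset (Atom.lang_subset_supportedIn A) I huA c hcA

lemma exists_hasCounts_of_mem_lang {D : Clause σ} (hD : (symbols_s4 D).Nodup) {A : Atom σ} {I : Iv}
    (hAD : (A, I) ∈ D) {u : UWord σ} (hu : u ∈ Clause.lang D) {c : σ}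
    (hc : c ∈ Atom.symbols_s4 A) (huc : u c ≠ 0) : ∃ n, I.Mem n ∧ Atom.HasCounts A n u := by
  obtain ⟨A', I', hA'D, hcA', huA'⟩ := exists_atom_of_mem_lang hu huc
  obtain ⟨rfl, rfl⟩ := Prod.mk.inj (eq_of_nodup_flatMap hD hA'D hAD hcA' hc)
  exact (Atom.mem_iterLang_lang_iff (nodup_atom_symbols hD hAD)).1 huA'

lemma lang_subset_countLE {D : Clause σ} (hD : (symbols_s4 D).Nodup) {A : Atom σ} {I : Iv}
    (hAD : (A, I) ∈ D) {a c : σ} (ha : (a, true) ∈ A) (hc : c ∈ Atom.symbols_s4 A) :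
    Clause.lang D ⊆ countLE a c := by
  intro u hu
  by_cases huc : u c = 0
  · simp [mem_countLE, huc]
  obtain ⟨n, -, hn⟩ := exists_hasCounts_of_mem_lang hD hAD hu hc huc
  exact (hn.le c).trans (hn.1 a ha).ge

theorem tupleClosed_iterLang_of_hi_le_one {D : Clause σ} (hD : (symbols_s4 D).Nodup) {I : Iv}
    (h1 : I.Mem 1) (hhi : I.hi ≤ 1) : TupleClosed (iterLang (Clause.lang D) I) := by
  intro w hw
  by_cases hw0 : w = 0
  · subst hw0
    exact hw.zero_mem
  obtain ⟨a₀, ha₀⟩ : ∃ a, w a ≠ 0 := by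
    by_contra! h
    exact hw0 (UWord.ext h)
  have hL : ∀ u ∈ iterLang (Clause.lang D) I, ∀ c, u c ≠ 0 → u ∈ Clause.lang D :=
    fun u hu c huc => (iterLang_subset_insert_zero hhi hu).resolve_left fun h => huc (h ▸ rfl)
  obtain ⟨v, hv, hva : v a₀ = w a₀⟩ := hw.2.1 a₀
  obtain ⟨A, IA, hAD, ha₀A, -⟩ := exists_atom_of_mem_lang (hL v hv a₀ (hva ▸ ha₀)) (hva ▸ ha₀)
  have hwit : ∀ u ∈ iterLang (Clause.lang D) I, ∀ c ∈ Atom.symbols_s4 A, u c ≠ 0 →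
      ∃ n, IA.Mem n ∧ Atom.HasCounts A n u :=
    fun u hu c hc huc => exists_hasCounts_of_mem_lang hD hAD (hL u hu c huc) hc huc
  -- a word of the language meeting `A` lies inside `A`, hence so does `w`, which meets `A` at `a₀`
  have hsupp : w ∈ supportedIn {a | a ∈ Atom.symbols_s4 A} := fun b hb => by
    by_contra hwb
    refine hw.1 (a₀, b) (fun u hu ⟨hua, hub⟩ => ?_) ⟨ha₀, hwb⟩
    obtain ⟨n, -, hn⟩ := hwit u hu a₀ ha₀A hua
    exact hub (hn.2.2 b hb)
  have hK : ∀ a c, (a, true) ∈ A → c ∈ Atom.symbols_s4 A → w c ≤ w a := fun a c ha hc =>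
    hw.le_of_subset_countLE (iterLang_subset (lang_subset_countLE hD hAD ha hc) I)
  obtain ⟨n, hn, hcount⟩ := Atom.exists_hasCounts_of_witness ha₀A ha₀ hK hsupp fun c hc hwc => by
    obtain ⟨u, hu, huc : u c = w c⟩ := hw.2.1 c
    obtain ⟨n, hn, hun⟩ := hwit u hu c hc (huc ▸ hwc)
    exact ⟨n, u, hn, hun, huc⟩
  exact mem_iterLang_of_mem h1
    ⟨(A, IA), hAD, (Atom.mem_iterLang_lang_iff (nodup_atom_symbols hD hAD)).2 ⟨n, hn, hcount⟩⟩

theorem tupleClosed_iterLang_of_hi_eq_top {D : Clause σ} (hD : (symbols_s4 D).Nodup)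
    (hDI : ∀ p ∈ D, p.2.Mem 1) {I : Iv} (hlo : I.lo ≤ 1) (hhi : I.hi = ⊤) :
    TupleClosed (iterLang (Clause.lang D) I) := by
  intro w hw
  by_cases hw0 : w = 0
  · subst hw0
    exact hw.zero_mem
  refine mem_iterLang_of_mem_closure hlo hhi ?_ hw0
  -- `(A₁ | ⋯ | A_k)*` contains `A₁* || ⋯ || A_k*`
  have hsub : listConcLang (fun p => iterLang (Atom.lang p.1) Iv.istar) D ⊆
      AddSubmonoid.closure (Clause.lang D) :=
    listConcLang_subset fun p hp => iterLang_subset (fun u hu =>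
      AddSubmonoid.subset_closure
        (show u ∈ Clause.lang D from ⟨p, hp, mem_iterLang_of_mem (hDI p hp) hu⟩)) _
  apply hsub
  rw [mem_listConcLang_iff (fun p _ => iterLang_subset (Atom.lang_subset_supportedIn p.1) _)
    (pairwise_disjoint_of_nodup_flatMap hD)]
  refine ⟨fun ⟨A, IA⟩ hAD => ?_, fun a ha => ?_⟩
  · have hK : ∀ a c, (a, true) ∈ A → c ∈ Atom.symbols_s4 A →
        restrict {a | a ∈ Atom.symbols_s4 A} w c ≤ restrict {a | a ∈ Atom.symbols_s4 A} w a :=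
      fun a c ha hc => by
        have haA : a ∈ {a | a ∈ Atom.symbols_s4 A} := List.mem_map_of_mem (f := Prod.fst) ha
        rw [restrict_apply_of_mem (show c ∈ {a | a ∈ Atom.symbols_s4 A} from hc),
          restrict_apply_of_mem haA]
        exact hw.le_of_subset_countLE (iterLang_subset (lang_subset_countLE hD hAD ha hc) I)
    obtain ⟨n, hn⟩ := Atom.exists_hasCounts hK fun a ha => restrict_apply_of_notMem ha w
    exact (Atom.mem_iterLang_lang_iff (nodup_atom_symbols hD hAD)).2
      ⟨n, Or.inl ⟨Nat.zero_le n, le_top⟩, hn⟩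
  · refine hw.mem_supportedIn (iterLang_subset (lang_subset_supportedIn D) I) a fun haD => ?_
    obtain ⟨p, hp, hap⟩ := List.mem_flatMap.1 haD
    exact ha p hp hap

end Clause

theorem DIME.tupleClosed_lang {σ : Type*} [DecidableEq σ] {E : DIME σ} (hE : E.WF) :
    TupleClosed E.lang := by
  have hnd : (E.clauses.flatMap fun p => Clause.symbols_s4 p.1).Nodup := hE.2
  refine TupleClosed.listConcLang
    (fun p _ => iterLang_subset (Clause.lang_subset_supportedIn p.1) p.2)
    (pairwise_disjoint_of_nodup_flatMap hnd) fun ⟨D, I⟩ hDI => ?_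
  have hD : (Clause.symbols_s4 D).Nodup := (List.nodup_flatMap.1 hnd).1 _ hDI
  rcases hE.1 _ hDI with ⟨hs, hI⟩ | hI
  · have hD1 : ∀ p ∈ D, p.2.Mem 1 := fun p hp => by
      rcases hs p hp with h | h <;> simp [h, Iv.Mem, Iv.one, Iv.qmark]
    rcases hI with rfl | rfl <;>
      exact Clause.tupleClosed_iterLang_of_hi_eq_top hD hD1 (by simp [Iv.iplus, Iv.istar]) rfl
  · rcases hI with rfl | rfl <;>
      exact Clause.tupleClosed_iterLang_of_hi_le_one hD (by simp [Iv.Mem, Iv.one, Iv.qmark]) le_rfl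

theorem statement4_general {σ : Type} [DecidableEq σ]
    (E E' : DIME σ) (hE : E.WF) :
    DIME.lang E' ⊆ DIME.lang E ↔ TupleLE (DIME.lang E') (DIME.lang E) :=
  (DIME.tupleClosed_lang hE).subset_iff_tupleLE

/-- For any two DIMEs `E` and `E'`:
`L(E') ⊆ L(E)` if and only if `Δ_{E'} ≼ Δ_E`. -/
theorem statement4 {σ : Type} [DecidableEq σ] [Fintype σ]
    (E E' : DIME σ) (hE : E.WF) (hE' : E'.WF) :
    DIME.lang E' ⊆ DIME.lang E ↔ TupleLE (DIME.lang E') (DIME.lang E) :=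
  statement4_general E E' hE
end
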